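/- Let m = 2k be even with k ≥ 1. Then the central Gaussian polynomial coefficient grows like n^{m−1} with leading coefficient given by an Eulerian number of type A: the sequence P_m^n(k·n)/n^{m−1} tends, as n → ∞, to A_{m−1, k}/((m−1)!·m!), where A_{m−1,k} = Σ_{j=0}^{k} (−1)^j · binom(m, j) · (k−j)^{m−1}. -/

import Mathlib

/-!
The Gaussian polynomial is `∏ i < m, (1 - q^(n+1+i)) / (1 - q^(i+1))`, and the denominator
alone generates the number `p_m(t)` of partitions of `t` into parts `≤ m`. Expanding the
numerator gives `P_m^n(s) = ∑_{T ⊆ {0,…,m-1}} (-1)^|T| p_m(s - ∑_{i ∈ T} (n+1+i))`.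

The recursion `p_{m+1}(t) = p_m(t) + p_{m+1}(t-m-1)` yields, by induction on `m` and `t`, the
sandwich `t^m ≤ m! (m+1)! p_{m+1}(t) ≤ (t + tri (m+1))^m`, so `p_{m+1}(t) ~ t^m / (m! (m+1)!)`.
For `m = 2k` and `s = kn`, a subset `T` with `j < k` elements therefore contributes
`(-1)^j ((k-j) n)^(2k-1) / ((2k-1)! (2k)!)` to leading order, while subsets with `j ≥ k`
elements do not contribute at all; grouping the `binom(2k, j)` subsets of size `j` gives
the Eulerian number.
-/

open Finset

/-- `W t d` : the number of tuples `x` of nonnegative integers with `∑ i, d i * x i = t`. -/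
noncomputable def W (t : ℤ) (d : List ℕ) : ℕ :=
  Nat.card {x : Fin d.length → ℕ // ∑ i, (d.get i : ℤ) * (x i : ℤ) = t}

/-- `Wm j t` : the restricted partition function `W(t, (1,2,…,j))`. -/
noncomputable def Wm (j : ℕ) (t : ℤ) : ℕ :=
  W t ((List.range j).map (· + 1))

/-- `P m n s` : the Gaussian polynomial coefficient, i.e. the number of tuples
`(x_1,…,x_m)` of nonnegative integers with `∑ i, i * x_i = s` and `∑ i, x_i ≤ n`. -/
noncomputable def P (m n s : ℕ) : ℕ :=
  Nat.card {x : Fin m → ℕ // (∑ i : Fin m, ((i : ℕ) + 1) * x i = s) ∧ ∑ i, x i ≤ n}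

/-- `tri j = j(j+1)/2`, the `j`-th triangular number. -/
def tri (j : ℕ) : ℕ := j * (j + 1) / 2

open Filter PowerSeries Topology
open scoped Nat

lemma Nat.card_subtype_eq_card_and_add_card_and_not {α : Type*} (p q : α → Prop)
    [Finite {a // p a}] :
    Nat.card {a // p a} = Nat.card {a // p a ∧ q a} + Nat.card {a // p a ∧ ¬q a} := by
  classical
  rw [← Nat.card_congr (Equiv.subtypeSubtypeEquivSubtypeInter p q),
    ← Nat.card_congr (Equiv.subtypeSubtypeEquivSubtypeInter p (¬q ·)), ← Nat.card_sum,
    Nat.card_congr (Equiv.sumCompl _)]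

lemma Nat.card_subtype_eq_and {α : Type*} (a : α) (p : Prop) [Decidable p] :
    Nat.card {x // x = a ∧ p} = if p then 1 else 0 := by
  split_ifs with h <;> simp [h]

lemma tri_succ (j : ℕ) : tri (j + 1) = tri j + (j + 1) := by
  unfold tri
  rw [show (j + 1) * (j + 1 + 1) = j * (j + 1) + (j + 1) * 2 by ring,
    Nat.add_mul_div_right _ _ two_pos]

lemma pow_succ_sub_pow_succ_le {x y d : ℝ} (hy : 0 ≤ y) (hyx : y ≤ x) (hd : x - y ≤ d) (n : ℕ) :
    x ^ (n + 1) - y ^ (n + 1) ≤ (n + 1) * d * x ^ n := by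
  have h := (le_abs_self _).trans (abs_pow_sub_pow_le x y (n + 1))
  rw [abs_of_nonneg (sub_nonneg.2 hyx), abs_of_nonneg (hy.trans hyx), abs_of_nonneg hy,
    max_eq_left hyx, Nat.add_sub_cancel] at h
  push_cast at h
  nlinarith [mul_le_mul_of_nonneg_right hd
    (mul_nonneg (by positivity : (0 : ℝ) ≤ n + 1) (pow_nonneg (hy.trans hyx) n))]

lemma factorial_mul_factorial_succ (m : ℕ) :
    ((m + 1)! * (m + 2)! : ℝ) = (m + 1) * (m + 2) * (m ! * (m + 1)!) := by
  push_cast [Nat.factorial_succ]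
  ring

lemma tendsto_natCast_mul_sub_div {a : ℕ} (ha : 0 < a) (c : ℕ) :
    Tendsto (fun n : ℕ => ((a * n - c : ℕ) : ℝ) / n) atTop (𝓝 a) := by
  have h : Tendsto (fun n : ℕ => (a : ℝ) - c / n) atTop (𝓝 a) := by
    simpa using tendsto_const_nhds.sub (tendsto_const_div_atTop_nhds_zero_nat (c : ℝ))
  refine h.congr' ?_
  filter_upwards [eventually_ge_atTop (max c 1)] with n hn
  have hc : c ≤ a * n := (le_max_left _ _).trans (hn.trans (Nat.le_mul_of_pos_left n ha))
  have hn0 : (n : ℝ) ≠ 0 := by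
    have : 1 ≤ n := (le_max_right _ _).trans hn
    positivity
  rw [Nat.cast_sub hc]
  push_cast
  field_simp

/-- `x` encodes the partition of `weight x` in which the part `i + 1` occurs `x i` times. -/
def weight {m : ℕ} (x : Fin m → ℕ) : ℕ := ∑ i : Fin m, ((i : ℕ) + 1) * x i

noncomputable def partitionCount (m t : ℕ) : ℕ := Nat.card {x : Fin m → ℕ // weight x = t}

lemma le_weight {m : ℕ} (x : Fin m → ℕ) (i : Fin m) : x i ≤ weight x :=
  (Nat.le_mul_of_pos_left _ (Nat.succ_pos i)).trans
    (single_le_sum (f := fun j : Fin m => ((j : ℕ) + 1) * x j) (fun _ _ => Nat.zero_le _)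
      (mem_univ i))

lemma sum_le_weight {m : ℕ} (x : Fin m → ℕ) : ∑ i, x i ≤ weight x :=
  sum_le_sum fun i _ => Nat.le_mul_of_pos_left _ (Nat.succ_pos i)

instance (m t : ℕ) : Finite {x : Fin m → ℕ // weight x = t} :=
  Finite.of_injective
    (fun x i => (⟨x.1 i, Nat.lt_succ_of_le (x.2 ▸ le_weight x.1 i :)⟩ : Fin (t + 1)))
    fun _ _ h => Subtype.ext <| funext fun i => congrArg Fin.val (congrFun h i)

lemma weight_snoc {m : ℕ} (y : Fin m → ℕ) (r : ℕ) :
    weight (Fin.snoc y r : Fin (m + 1) → ℕ) = weight y + (m + 1) * r := by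
  simp [weight, Fin.sum_univ_castSucc]

lemma weight_cons {m : ℕ} (r : ℕ) (y : Fin m → ℕ) :
    weight (Fin.cons r y : Fin (m + 1) → ℕ) = r + weight y + ∑ i, y i := by
  simp only [weight, Fin.sum_univ_succ, Fin.cons_zero, Fin.cons_succ, Fin.val_zero, Fin.val_succ,
    add_mul, one_mul, sum_add_distrib]
  ring

lemma weight_add {m : ℕ} (x y : Fin m → ℕ) : weight (x + y) = weight x + weight y := by
  simp [weight, mul_add, sum_add_distrib]

lemma weight_single {m : ℕ} (i : Fin m) : weight (Pi.single i 1) = i + 1 := by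
  simp [weight, Pi.single_apply]

lemma partitionCount_zero (t : ℕ) : partitionCount 0 t = if t = 0 then 1 else 0 := by
  rw [partitionCount, ← Nat.card_subtype_eq_and (0 : Fin 0 → ℕ)]
  exact Nat.card_congr (Equiv.subtypeEquivRight fun x => by
    simp [weight, Subsingleton.elim x 0, eq_comm])

lemma card_weight_eq_and_last_eq_zero (m t : ℕ) :
    Nat.card {x : Fin (m + 1) → ℕ // weight x = t ∧ x (Fin.last m) = 0} = partitionCount m t := by
  symm
  refine Nat.card_eq_of_bijective (fun y => ⟨Fin.snoc y.1 0, by simp [weight_snoc, y.2]⟩)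
    ⟨fun y z h => Subtype.ext ?_, fun x => ⟨⟨Fin.init x.1, ?_⟩, Subtype.ext ?_⟩⟩
  · simpa using congrArg (fun x => Fin.init x.1) h
  · have := x.2.1
    rwa [← Fin.snoc_init_self x.1, weight_snoc, x.2.2, mul_zero, add_zero] at this
  · conv_rhs => rw [← Fin.snoc_init_self x.1, x.2.2]

lemma card_weight_eq_and_last_ne_zero (m t : ℕ) :
    Nat.card {x : Fin (m + 1) → ℕ // weight x = t ∧ ¬x (Fin.last m) = 0} =
      if m + 1 ≤ t then partitionCount (m + 1) (t - (m + 1)) else 0 := by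
  split_ifs with h
  · symm
    have hlast := weight_single (Fin.last m)
    rw [Fin.val_last] at hlast
    refine Nat.card_eq_of_bijective
      (fun y => ⟨y.1 + Pi.single (Fin.last m) 1, by rw [weight_add, y.2, hlast]; omega, by simp⟩)
      ⟨fun y z h => Subtype.ext (add_left_injective _ (congrArg Subtype.val h :)),
        fun x => ⟨⟨x.1 - Pi.single (Fin.last m) 1, ?_⟩, Subtype.ext ?_⟩⟩
    all_goals
      have hx : x.1 - Pi.single (Fin.last m) 1 + Pi.single (Fin.last m) 1 = x.1 :=
        tsub_add_cancel_of_le fun i => by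
          rcases eq_or_ne i (Fin.last m) with rfl | hi
          · simpa [Nat.one_le_iff_ne_zero] using x.2.2
          · simp [hi]
    · have := congrArg weight hx
      rw [weight_add, hlast, x.2.1] at this
      omega
    · exact hx
  · have : IsEmpty {x : Fin (m + 1) → ℕ // weight x = t ∧ ¬x (Fin.last m) = 0} := ⟨fun x => h ?_⟩
    · exact Nat.card_of_isEmpty
    have hw := x.2.1
    rw [← Fin.snoc_init_self x.1, weight_snoc] at hw
    have := Nat.le_mul_of_pos_right (m + 1) (Nat.pos_of_ne_zero x.2.2)
    omega

lemma partitionCount_succ (m t : ℕ) :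
    partitionCount (m + 1) t =
      partitionCount m t + if m + 1 ≤ t then partitionCount (m + 1) (t - (m + 1)) else 0 := by
  rw [partitionCount, Nat.card_subtype_eq_card_and_add_card_and_not _ fun x => x (Fin.last m) = 0,
    card_weight_eq_and_last_eq_zero, card_weight_eq_and_last_ne_zero]

lemma partitionCount_one (t : ℕ) : partitionCount 1 t = 1 := by
  induction t using Nat.strong_induction_on with
  | _ t ih =>
    rw [partitionCount_succ, partitionCount_zero]
    rcases Nat.eq_zero_or_pos t with rfl | ht
    · simp
    · rw [if_neg ht.ne', if_pos (by omega), ih _ (by omega)]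

lemma P_eq_card (m n s : ℕ) : P m n s = Nat.card {x : Fin m → ℕ // weight x = s ∧ ∑ i, x i ≤ n} :=
  rfl

instance (m n s : ℕ) : Finite {x : Fin m → ℕ // weight x = s ∧ ∑ i, x i ≤ n} :=
  Finite.of_injective (fun x => (⟨x.1, x.2.1⟩ : {x : Fin m → ℕ // weight x = s}))
    fun _ _ h => Subtype.ext (congrArg Subtype.val h :)

lemma P_of_forall_eq_zero {m n : ℕ} (h : ∀ x : Fin m → ℕ, ∑ i, x i ≤ n → x = 0) (s : ℕ) :
    P m n s = if s = 0 then 1 else 0 := by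
  rw [P_eq_card, ← Nat.card_subtype_eq_and (0 : Fin m → ℕ)]
  refine Nat.card_congr (Equiv.subtypeEquivRight fun x => ⟨fun hx => ?_, ?_⟩)
  · obtain rfl := h x hx.2
    simp [weight, ← hx.1]
  · rintro ⟨rfl, rfl⟩
    simp [weight]

lemma card_weight_eq_and_sum_eq (m N s : ℕ) :
    Nat.card {x : Fin (m + 1) → ℕ // weight x = s ∧ ∑ i, x i = N} =
      if N ≤ s then P m N (s - N) else 0 := by
  split_ifs with h
  · rw [P_eq_card]
    symm
    refine Nat.card_eq_of_bijective
      (fun y => ⟨Fin.cons (N - ∑ i, y.1 i) y.1, ?_⟩)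
      ⟨fun y z hyz => Subtype.ext (by simpa using congrArg (fun x => Fin.tail x.1) hyz),
        fun x => ⟨⟨Fin.tail x.1, ?_⟩, Subtype.ext ?_⟩⟩
    · have := y.2
      rw [weight_cons, Fin.sum_cons]
      omega
    · have hw := x.2.1
      have hs := x.2.2
      rw [← Fin.cons_self_tail x.1, weight_cons] at hw
      rw [← Fin.cons_self_tail x.1, Fin.sum_cons] at hs
      omega
    · have hs := x.2.2
      rw [← Fin.cons_self_tail x.1, Fin.sum_cons] at hs
      conv_rhs => rw [← Fin.cons_self_tail x.1]
      dsimp only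
      congr 1
      omega
  · have : IsEmpty {x : Fin (m + 1) → ℕ // weight x = s ∧ ∑ i, x i = N} :=
      ⟨fun x => h (by simpa [x.2.1, x.2.2] using sum_le_weight x.1)⟩
    exact Nat.card_of_isEmpty

lemma P_succ_succ (m n s : ℕ) :
    P (m + 1) (n + 1) s = P (m + 1) n s + if n + 1 ≤ s then P m (n + 1) (s - (n + 1)) else 0 := by
  rw [P_eq_card, P_eq_card, Nat.card_subtype_eq_card_and_add_card_and_not _ fun x => ∑ i, x i ≤ n,
    ← card_weight_eq_and_sum_eq]
  congr 1
  · exact Nat.card_congr (Equiv.subtypeEquivRight fun x => by omega)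
  · exact Nat.card_congr (Equiv.subtypeEquivRight fun x => by omega)

noncomputable def partitionGF (m : ℕ) : PowerSeries ℤ := mk fun t => (partitionCount m t : ℤ)

noncomputable def gaussianGF (m n : ℕ) : PowerSeries ℤ := mk fun s => (P m n s : ℤ)

lemma mk_ite_zero_eq_one : (mk fun s => if s = 0 then (1 : ℤ) else 0) = 1 := by
  ext s
  simp [coeff_one]

lemma one_sub_X_pow_mul_partitionGF_succ (m : ℕ) :
    (1 - X ^ (m + 1)) * partitionGF (m + 1) = partitionGF m := by
  ext t
  rw [sub_mul, one_mul, map_sub, mul_comm, coeff_mul_X_pow']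
  simp only [partitionGF, coeff_mk, partitionCount_succ m t]
  split_ifs <;> push_cast <;> ring

lemma prod_mul_partitionGF (m : ℕ) :
    (∏ i ∈ range m, (1 - X ^ (i + 1))) * partitionGF m = 1 := by
  induction m with
  | zero => simp [partitionGF, partitionCount_zero, mk_ite_zero_eq_one]
  | succ m ih =>
    rw [prod_range_succ, mul_assoc, one_sub_X_pow_mul_partitionGF_succ, ih]

lemma gaussianGF_succ_succ (m n : ℕ) :
    gaussianGF (m + 1) (n + 1) = gaussianGF (m + 1) n + X ^ (n + 1) * gaussianGF m (n + 1) := by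
  ext s
  rw [map_add, mul_comm, coeff_mul_X_pow']
  simp only [gaussianGF, coeff_mk, P_succ_succ m n s]
  split_ifs <;> push_cast <;> ring

lemma gaussianGF_of_forall_eq_zero {m n : ℕ} (h : ∀ x : Fin m → ℕ, ∑ i, x i ≤ n → x = 0) :
    gaussianGF m n = 1 := by
  simp only [gaussianGF, P_of_forall_eq_zero h, Nat.cast_ite, Nat.cast_one, Nat.cast_zero,
    mk_ite_zero_eq_one]

lemma prod_mul_gaussianGF (m n : ℕ) :
    (∏ i ∈ range m, (1 - X ^ (i + 1))) * gaussianGF m n = ∏ i ∈ range m, (1 - X ^ (n + 1 + i)) := by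
  induction m generalizing n with
  | zero =>
    simp [gaussianGF_of_forall_eq_zero fun x _ => Subsingleton.elim x 0]
  | succ m ih =>
    induction n with
    | zero =>
      rw [gaussianGF_of_forall_eq_zero fun x hx => funext fun i => ?_, mul_one]
      · exact prod_congr rfl fun i _ => by rw [zero_add, add_comm]
      · simpa using (sum_eq_zero_iff.mp (Nat.le_zero.mp hx)) i (mem_univ i)
    | succ n ihn =>
      have hB : ∏ i ∈ range (m + 1), (1 - X ^ (n + 1 + i) : PowerSeries ℤ) =
          (∏ i ∈ range m, (1 - X ^ (n + 1 + 1 + i))) * (1 - X ^ (n + 1)) := by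
        rw [prod_range_succ', add_zero]
        exact congrArg (· * _) <| prod_congr rfl fun i _ => by rw [add_assoc (n + 1), add_comm i]
      rw [prod_range_succ, hB] at ihn
      rw [gaussianGF_succ_succ, prod_range_succ, prod_range_succ]
      linear_combination ihn + X ^ (n + 1) * (1 - X ^ (m + 1)) * ih (n + 1)

lemma gaussianGF_eq (m n : ℕ) :
    gaussianGF m n = partitionGF m * ∏ i ∈ range m, (1 - X ^ (n + 1 + i)) := by
  rw [← prod_mul_gaussianGF, ← mul_assoc, mul_comm (partitionGF m), prod_mul_partitionGF, one_mul]

lemma P_eq_sum_powerset (m n s : ℕ) :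
    (P m n s : ℤ) = ∑ T ∈ (range m).powerset, (-1) ^ T.card *
      if ∑ i ∈ T, (n + 1 + i) ≤ s then (partitionCount m (s - ∑ i ∈ T, (n + 1 + i)) : ℤ)
      else 0 := by
  have := congrArg (coeff s) (gaussianGF_eq m n)
  rw [prod_sub] at this
  simp only [gaussianGF, partitionGF, coeff_mk, prod_const_one, mul_one,
    prod_pow_eq_pow_sum, mul_sum, map_sum] at this
  rw [this]
  refine sum_congr rfl fun T _ => ?_
  rw [mul_left_comm, show ((-1) ^ #T : PowerSeries ℤ) = C ((-1) ^ #T) by simp, coeff_C_mul,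
    coeff_mul_X_pow', coeff_mk]

lemma pow_le_mul_partitionCount (m t : ℕ) :
    (t : ℝ) ^ m ≤ m ! * (m + 1)! * partitionCount (m + 1) t := by
  induction m generalizing t with
  | zero => simp [partitionCount_one]
  | succ m ih =>
    induction t using Nat.strong_induction_on with
    | _ t iht =>
      have hrest : ((t - (m + 2) : ℕ) : ℝ) ^ (m + 1) ≤ (m + 1)! * (m + 2)! *
          ((if m + 2 ≤ t then partitionCount (m + 2) (t - (m + 2)) else 0 : ℕ) : ℝ) := by
        split_ifs with h
        · exact iht _ (by omega)
        · simp [Nat.sub_eq_zero_of_le (by omega : t ≤ m + 2)]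
      have hstep := pow_succ_sub_pow_succ_le (x := t) (y := ((t - (m + 2) : ℕ) : ℝ))
        (d := m + 2) (Nat.cast_nonneg _) (by simp) (by rw [sub_le_iff_le_add]; norm_cast; omega) m
      calc (t : ℝ) ^ (m + 1)
          ≤ (m + 1) * (m + 2) * t ^ m + ((t - (m + 2) : ℕ) : ℝ) ^ (m + 1) := by linarith
        _ ≤ (m + 1) * (m + 2) * (m ! * (m + 1)! * partitionCount (m + 1) t) + (m + 1)! * (m + 2)! *
            ((if m + 2 ≤ t then partitionCount (m + 2) (t - (m + 2)) else 0 : ℕ) : ℝ) :=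
          add_le_add (mul_le_mul_of_nonneg_left (ih t) (by positivity)) hrest
        _ = (m + 1)! * (m + 2)! * partitionCount (m + 2) t := by
          rw [partitionCount_succ (m + 1) t, Nat.cast_add, mul_add, factorial_mul_factorial_succ]
          ring

lemma mul_partitionCount_le_pow (m t : ℕ) :
    m ! * (m + 1)! * partitionCount (m + 1) t ≤ ((t : ℝ) + tri (m + 1)) ^ m := by
  induction m generalizing t with
  | zero => simp [partitionCount_one]
  | succ m ih =>
    induction t using Nat.strong_induction_on with
    | _ t iht =>
      have hrest : (m + 1)! * (m + 2)! *
          ((if m + 2 ≤ t then partitionCount (m + 2) (t - (m + 2)) else 0 : ℕ) : ℝ) ≤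
          ((t : ℝ) + tri (m + 1)) ^ (m + 1) := by
        split_ifs with h
        · refine (iht _ (by omega)).trans_eq ?_
          rw [tri_succ, Nat.cast_sub h]
          push_cast
          ring_nf
        · simp only [Nat.cast_zero, mul_zero]
          positivity
      have hbern := pow_add_mul_le_add_pow (a := (t : ℝ) + tri (m + 1)) (b := m + 2)
        (by positivity) (by positivity) (m + 1)
      push_cast at hbern
      calc (m + 1)! * (m + 2)! * (partitionCount (m + 2) t : ℝ)
          = (m + 1) * (m + 2) * (m ! * (m + 1)! * partitionCount (m + 1) t) + (m + 1)! * (m + 2)! *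
            ((if m + 2 ≤ t then partitionCount (m + 2) (t - (m + 2)) else 0 : ℕ) : ℝ) := by
            rw [partitionCount_succ (m + 1) t, Nat.cast_add, mul_add, factorial_mul_factorial_succ]
            ring
        _ ≤ (m + 1) * (m + 2) * ((t : ℝ) + tri (m + 1)) ^ m + ((t : ℝ) + tri (m + 1)) ^ (m + 1) :=
          add_le_add (mul_le_mul_of_nonneg_left (ih t) (by positivity)) hrest
        _ ≤ ((t : ℝ) + tri (m + 1) + (m + 2)) ^ (m + 1) := by linarith
        _ = ((t : ℝ) + tri (m + 2)) ^ (m + 1) := by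
          rw [tri_succ (m + 1)]
          push_cast
          ring

lemma tendsto_partitionCount_div_pow (m : ℕ) {u : ℕ → ℕ} {a : ℝ}
    (hu : Tendsto (fun n => (u n : ℝ) / n) atTop (𝓝 a)) :
    Tendsto (fun n => (partitionCount (m + 1) (u n) : ℝ) / n ^ m) atTop
      (𝓝 (a ^ m / (m ! * (m + 1)!))) := by
  have hC : (0 : ℝ) < m ! * (m + 1)! := by positivity
  have hshift : Tendsto (fun n => ((u n : ℝ) + tri (m + 1)) / n) atTop (𝓝 a) := by
    simpa [add_div] using hu.add (tendsto_const_div_atTop_nhds_zero_nat (tri (m + 1) : ℝ))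
  refine tendsto_of_tendsto_of_tendsto_of_le_of_le' ((hu.pow m).div_const _)
    ((hshift.pow m).div_const _) (Eventually.of_forall fun n => ?_) (Eventually.of_forall fun n => ?_)
  · rw [div_pow, div_right_comm]
    gcongr
    rw [div_le_iff₀' hC]
    exact pow_le_mul_partitionCount m (u n)
  · rw [div_pow, div_right_comm (_ ^ m)]
    gcongr
    rw [le_div_iff₀' hC]
    exact mul_partitionCount_le_pow m (u n)

lemma tendsto_ite_partitionCount_div_pow {k m : ℕ} (hk : k ≠ 0) (hm : m ≠ 0) (T : Finset ℕ) :
    Tendsto (fun n : ℕ => (if ∑ i ∈ T, (n + 1 + i) ≤ k * n then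
        (partitionCount (m + 1) (k * n - ∑ i ∈ T, (n + 1 + i)) : ℝ) else 0) / n ^ m) atTop
      (𝓝 (((k - #T : ℕ) : ℝ) ^ m / (m ! * (m + 1)!))) := by
  have hsum (n : ℕ) : ∑ i ∈ T, (n + 1 + i) = #T * n + ∑ i ∈ T, (i + 1) := by
    rw [sum_congr rfl fun i _ => add_assoc n 1 i, sum_add_distrib, sum_const, smul_eq_mul]
    simp only [add_comm 1]
  rcases lt_or_ge #T k with hT | hT
  · refine (tendsto_partitionCount_div_pow m
      (tendsto_natCast_mul_sub_div (Nat.sub_pos_of_lt hT) (∑ i ∈ T, (i + 1)))).congr' ?_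
    filter_upwards [eventually_ge_atTop (∑ i ∈ T, (i + 1))] with n hn
    have hle : #T * n + n ≤ k * n := by
      simpa [Nat.succ_mul] using Nat.mul_le_mul_right n (Nat.succ_le_of_lt hT)
    rw [hsum, if_pos (by omega), Nat.sub_mul, Nat.sub_sub]
  · have hne (n : ℕ) : ¬∑ i ∈ T, (n + 1 + i) ≤ k * n := by
      have h1 : #T * (n + 1) ≤ ∑ i ∈ T, (n + 1 + i) := by
        simpa using card_nsmul_le_sum T (fun i => n + 1 + i) (n + 1) fun i _ => Nat.le_add_right _ _
      have h2 := Nat.mul_le_mul_right (n + 1) hT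
      rw [Nat.mul_succ] at h2
      omega
    simp [hne, Nat.sub_eq_zero_of_le hT, zero_pow hm]

lemma sum_powerset_neg_one_pow_mul_pow {k m : ℕ} (hkm : k ≤ m + 1) (hm : m ≠ 0) :
    ∑ T ∈ (range (m + 1)).powerset, (-1 : ℝ) ^ #T * ((k - #T : ℕ) : ℝ) ^ m =
      ∑ j ∈ range (k + 1), (-1 : ℝ) ^ j * (m + 1).choose j * ((k - j : ℕ) : ℝ) ^ m := by
  rw [sum_powerset_apply_card (fun j => (-1 : ℝ) ^ j * ((k - j : ℕ) : ℝ) ^ m), card_range,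
    ← sum_subset (range_subset_range.2 (by omega : k + 1 ≤ m + 1 + 1))]
  · exact sum_congr rfl fun j _ => by rw [nsmul_eq_mul]; ring
  · intro j _ hj
    rw [mem_range, not_lt] at hj
    simp [Nat.sub_eq_zero_of_le (by omega : k ≤ j), zero_pow hm]

/-- for even `m = 2k`, the central Gaussian polynomial coefficient grows
like `n^{m−1}` with leading coefficient `A_{m−1,k}/((m−1)!·m!)`, where
`A_{m−1,k} = Σ_{j=0}^{k} (−1)^j binom(m,j) (k−j)^{m−1}` is an Eulerian number of type A. -/
theorem gaussian_max_leading_term_even (k : ℕ) (hk : 1 ≤ k) :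
    Filter.Tendsto
      (fun n : ℕ => (P (2 * k) n (k * n) : ℝ) / (n : ℝ) ^ (2 * k - 1))
      Filter.atTop
      (nhds ((∑ j ∈ Finset.range (k + 1),
          (-1 : ℝ) ^ j * (Nat.choose (2 * k) j : ℝ) * ((k - j : ℕ) : ℝ) ^ (2 * k - 1)) /
        ((Nat.factorial (2 * k - 1) : ℝ) * (Nat.factorial (2 * k) : ℝ)))) := by
  obtain ⟨m, hm⟩ : ∃ m, m + 1 = 2 * k := ⟨2 * k - 1, by omega⟩
  rw [show 2 * k - 1 = m by omega, ← hm,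
    ← sum_powerset_neg_one_pow_mul_pow (by omega) (by omega), sum_div]
  have hP (n : ℕ) : (P (m + 1) n (k * n) : ℝ) / n ^ m =
      ∑ T ∈ (range (m + 1)).powerset, (-1) ^ #T * ((if ∑ i ∈ T, (n + 1 + i) ≤ k * n then
        (partitionCount (m + 1) (k * n - ∑ i ∈ T, (n + 1 + i)) : ℝ) else 0) / n ^ m) := by
    rw [← Int.cast_natCast, P_eq_sum_powerset]
    push_cast
    simp only [sum_div, mul_div_assoc]
  simp_rw [hP, mul_div_assoc]
  exact tendsto_finsetSum _ fun T _ =>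
    (tendsto_ite_partitionCount_div_pow (by omega) (by omega) T).const_mul _
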